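/- Let (Ω, P) be a probability space and k a positive natural number. For each i ∈ Fin k, let gᵢ : Ω → ℝ be a square-integrable random variable with E[gᵢ] = μᵢ and Var[gᵢ] = σ²/B for a real σ ≥ 0 and positive natural number B, and let mᵢ : Ω → ℝ be a random variable taking values in {0,1} with P(mᵢ = 1) = pᵢ for reals 0 < pᵢ ≤ 1. Assume the family {g₁, …, g_k, m₁, …, m_k} is mutually independent, and set g̃ᵢ := (mᵢ/pᵢ)·gᵢ. Let p̂ := minᵢ pᵢ. Then the covariance matrix Σ of (g̃₁, …, g̃_k), i.e., the k × k matrix with entries Σᵢⱼ = Cov(g̃ᵢ, g̃ⱼ), is the diagonal matrix with diagonal entries Var[g̃ᵢ], and its Frobenius norm satisfies ‖Σ‖_F ≤ ‖D‖_F, where D is the diagonal k × k matrix with diagonal entries σ²/(p̂·B) + ((1 − p̂)/p̂)·μᵢ². -/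

import Mathlib

open MeasureTheory ProbabilityTheory

/-- The covariance `Cov(X,Y) = E[XY] - E[X]E[Y]`. -/
noncomputable def cov {Ω : Type*} [MeasurableSpace Ω] (μ : Measure Ω) (X Y : Ω → ℝ) : ℝ :=
  (∫ ω, X ω * Y ω ∂μ) - (∫ ω, X ω ∂μ) * (∫ ω, Y ω ∂μ)

/-- The variance `Var[X] = E[X²] - (E[X])²`. -/
noncomputable def var {Ω : Type*} [MeasurableSpace Ω] (μ : Measure Ω) (X : Ω → ℝ) : ℝ :=
  (∫ ω, X ω ^ 2 ∂μ) - (∫ ω, X ω ∂μ) ^ 2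

/-- The Frobenius norm `‖A‖_F = √(∑ᵢⱼ Aᵢⱼ²)` of a square real matrix. -/
noncomputable def frobeniusNorm {k : ℕ} (A : Matrix (Fin k) (Fin k) ℝ) : ℝ :=
  Real.sqrt (∑ i, ∑ j, (A i j) ^ 2)

/-!
Off the diagonal, `g̃ᵢ` and `g̃ⱼ` are functions of the disjoint independent pairs `(gᵢ, mᵢ)` and
`(gⱼ, mⱼ)`, so their covariance vanishes. On the diagonal, independence of `mᵢ` and `gᵢ` together
with `mᵢ² = mᵢ` and `E[mᵢ] = pᵢ` give `E[g̃ᵢ] = E[gᵢ]` and `E[g̃ᵢ²] = E[gᵢ²]/pᵢ`, hence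
`Var[g̃ᵢ] = E[gᵢ²]/pᵢ - μᵢ²`, which is antitone in `pᵢ` and equals the entry of `D` at `pᵢ = p̂`.
-/

lemma frobeniusNorm_diagonal {k : ℕ} (d : Fin k → ℝ) :
    frobeniusNorm (Matrix.diagonal d) = √(∑ i, d i ^ 2) := by
  simp [frobeniusNorm, Matrix.diagonal_apply, ite_pow]

lemma frobeniusNorm_diagonal_le {k : ℕ} {d e : Fin k → ℝ} (h : ∀ i, |d i| ≤ |e i|) :
    frobeniusNorm (Matrix.diagonal d) ≤ frobeniusNorm (Matrix.diagonal e) := by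
  rw [frobeniusNorm_diagonal, frobeniusNorm_diagonal]
  exact Real.sqrt_le_sqrt <| Finset.sum_le_sum fun i _ => sq_le_sq.mpr (h i)

lemma abs_div_sub_le_abs_div_sub {a b p q : ℝ} (hb : 0 ≤ b) (hba : b ≤ a) (hq : 0 < q)
    (hqp : q ≤ p) (hp1 : p ≤ 1) : |a / p - b| ≤ |a / q - b| := by
  have ha : 0 ≤ a := hb.trans hba
  exact abs_le_abs_of_nonneg (sub_nonneg.mpr (hba.trans (le_div_self ha (hq.trans_le hqp) hp1)))
    (sub_le_sub_right (div_le_div_of_nonneg_left ha hq hqp) _)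

section Moments

variable {Ω : Type*} [MeasurableSpace Ω] {μ : Measure Ω}

lemma cov_self (X : Ω → ℝ) : cov μ X X = var μ X := by
  simp only [cov, var, sq]

lemma cov_eq_zero_of_indepFun {X Y : Ω → ℝ} (hXY : IndepFun X Y μ)
    (hX : AEStronglyMeasurable X μ) (hY : AEStronglyMeasurable Y μ) : cov μ X Y = 0 := by
  rw [cov, hXY.integral_fun_mul_eq_mul_integral hX hY, sub_self]

lemma covMatrix_eq_diagonal {ι : Type*} [DecidableEq ι] {X : ι → Ω → ℝ}
    (hX : ∀ i, AEStronglyMeasurable (X i) μ) (hind : Pairwise fun i j => IndepFun (X i) (X j) μ) :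
    Matrix.of (fun i j => cov μ (X i) (X j)) = Matrix.diagonal fun i => var μ (X i) := by
  ext i j
  rcases eq_or_ne i j with rfl | hij
  · rw [Matrix.of_apply, Matrix.diagonal_apply_eq, cov_self]
  · rw [Matrix.of_apply, Matrix.diagonal_apply_ne _ hij,
      cov_eq_zero_of_indepFun (hind hij) (hX i) (hX j)]

lemma integral_eq_measureReal_of_zero_or_one {m : Ω → ℝ} (hm : Measurable m)
    (h01 : ∀ ω, m ω = 0 ∨ m ω = 1) : ∫ ω, m ω ∂μ = μ.real {ω | m ω = 1} := by
  have hm_eq : m = Set.indicator {ω | m ω = 1} 1 := by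
    funext ω
    rcases h01 ω with h | h <;> simp [h]
  conv_lhs => rw [hm_eq]
  exact integral_indicator_one (hm (measurableSet_singleton 1))

variable {m g : Ω → ℝ} {p : ℝ}

lemma integral_masked (hmg : IndepFun m g μ) (hm : AEStronglyMeasurable m μ)
    (hg : AEStronglyMeasurable g μ) (hmean : ∫ ω, m ω ∂μ = p) (hp : p ≠ 0) :
    ∫ ω, m ω / p * g ω ∂μ = ∫ ω, g ω ∂μ := by
  simp_rw [div_mul_eq_mul_div, integral_div, hmg.integral_fun_mul_eq_mul_integral hm hg, hmean]
  field_simp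

lemma integral_masked_sq (hmg : IndepFun m g μ) (hm : AEStronglyMeasurable m μ)
    (hg : AEStronglyMeasurable g μ) (h01 : ∀ ω, m ω = 0 ∨ m ω = 1)
    (hmean : ∫ ω, m ω ∂μ = p) (hp : p ≠ 0) :
    ∫ ω, (m ω / p * g ω) ^ 2 ∂μ = (∫ ω, g ω ^ 2 ∂μ) / p := by
  have hmg2 : IndepFun m (fun ω => g ω ^ 2) μ :=
    hmg.comp measurable_id (measurable_id.pow_const 2)
  have hsq : ∀ ω, (m ω / p * g ω) ^ 2 = m ω * g ω ^ 2 / p ^ 2 := fun ω => by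
    rcases h01 ω with h | h <;> rw [h] <;> ring
  simp_rw [hsq, integral_div, hmg2.integral_fun_mul_eq_mul_integral hm (hg.pow 2), hmean]
  field_simp

lemma var_masked (hmg : IndepFun m g μ) (hm : AEStronglyMeasurable m μ)
    (hg : AEStronglyMeasurable g μ) (h01 : ∀ ω, m ω = 0 ∨ m ω = 1)
    (hmean : ∫ ω, m ω ∂μ = p) (hp : p ≠ 0) :
    var μ (fun ω => m ω / p * g ω) = (∫ ω, g ω ^ 2 ∂μ) / p - (∫ ω, g ω ∂μ) ^ 2 := by
  rw [var, integral_masked_sq hmg hm hg h01 hmean hp, integral_masked hmg hm hg hmean hp]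

end Moments

lemma ProbabilityTheory.iIndepFun.indepFun_masked {Ω ι : Type*} [MeasurableSpace Ω] {μ : Measure Ω}
    {g m : ι → Ω → ℝ}
    (hind : iIndepFun (m := fun _ : ι ⊕ ι => Real.measurableSpace) (Sum.elim g m) μ)
    (hg : ∀ i, Measurable (g i)) (hm : ∀ i, Measurable (m i)) (c : ι → ℝ) {i j : ι}
    (hij : i ≠ j) :
    IndepFun (fun ω => m i ω / c i * g i ω) (fun ω => m j ω / c j * g j ω) μ := by
  have hmeas : ∀ s, Measurable (Sum.elim g m s) := by
    rintro (s | s)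
    exacts [hg s, hm s]
  have hpairs : IndepFun (fun ω => (g i ω, m i ω)) (fun ω => (g j ω, m j ω)) μ :=
    hind.indepFun_prodMk_prodMk hmeas (Sum.inl i) (Sum.inr i) (Sum.inl j) (Sum.inr j)
      (by simp [hij]) (by simp) (by simp) (by simp [hij])
  exact hpairs.comp ((measurable_snd.div_const _).mul measurable_fst)
    ((measurable_snd.div_const _).mul measurable_fst)

theorem masked_gradient_covariance_bound_general {Ω : Type*} [MeasurableSpace Ω]
    (μ : Measure Ω)
    (k : ℕ) (hk : 0 < k) (g m : Fin k → Ω → ℝ)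
    (μv : Fin k → ℝ) (σ : ℝ) (B : ℕ)
    (p : Fin k → ℝ) (hp0 : ∀ i, 0 < p i) (hp1 : ∀ i, p i ≤ 1)
    (hgm : ∀ i, Measurable (g i))
    (hgmean : ∀ i, ∫ ω, g i ω ∂μ = μv i)
    (hgvar : ∀ i, var μ (g i) = σ ^ 2 / (B : ℝ))
    (hmm : ∀ i, Measurable (m i))
    (hm01 : ∀ i ω, m i ω = 0 ∨ m i ω = 1)
    (hmp : ∀ i, μ {ω | m i ω = 1} = ENNReal.ofReal (p i))
    (hind : iIndepFun (m := fun _ : Fin k ⊕ Fin k => Real.measurableSpace)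
      (Sum.elim g m) μ)
    (gmask : Fin k → Ω → ℝ)
    (hgmask : ∀ i ω, gmask i ω = (m i ω / p i) * g i ω)
    (phat : ℝ)
    (hphat : phat = Finset.univ.inf' (Finset.univ_nonempty_iff.mpr ⟨⟨0, hk⟩⟩) p)
    (Smat : Matrix (Fin k) (Fin k) ℝ)
    (hS : ∀ i j, Smat i j = cov μ (gmask i) (gmask j)) :
    Smat = Matrix.diagonal (fun i => var μ (gmask i))
      ∧ frobeniusNorm Smat
        ≤ frobeniusNorm (Matrix.diagonal
            (fun i => σ ^ 2 / (phat * (B : ℝ)) + ((1 - phat) / phat) * (μv i) ^ 2)) := by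
  have hgmask_eq : ∀ i, gmask i = fun ω => m i ω / p i * g i ω := fun i => funext (hgmask i)
  have hphat_le : ∀ i, phat ≤ p i := fun i => hphat ▸ Finset.inf'_le p (Finset.mem_univ i)
  have hphat_pos : 0 < phat := hphat ▸ (Finset.lt_inf'_iff _).mpr fun i _ => hp0 i
  have hmean : ∀ i, ∫ ω, m i ω ∂μ = p i := fun i => by
    rw [integral_eq_measureReal_of_zero_or_one (hmm i) (hm01 i), measureReal_def, hmp i,
      ENNReal.toReal_ofReal (hp0 i).le]
  have hsecond : ∀ i, ∫ ω, g i ω ^ 2 ∂μ = σ ^ 2 / B + μv i ^ 2 := fun i => by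
    have := hgvar i
    rw [var, hgmean i] at this
    linarith
  have hindep : ∀ i, IndepFun (m i) (g i) μ := fun i =>
    hind.indepFun (i := Sum.inr i) (j := Sum.inl i) Sum.inr_ne_inl
  have hvar : ∀ i, var μ (gmask i) = (σ ^ 2 / B + μv i ^ 2) / p i - μv i ^ 2 := fun i => by
    rw [hgmask_eq, var_masked (hindep i) (hmm i).aestronglyMeasurable
      (hgm i).aestronglyMeasurable (hm01 i) (hmean i) (hp0 i).ne', hsecond, hgmean]
  have hgmask_meas : ∀ i, AEStronglyMeasurable (gmask i) μ := fun i =>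
    hgmask_eq i ▸ ((hmm i).div_const _ |>.mul (hgm i)).aestronglyMeasurable
  have hdiag : Smat = Matrix.diagonal (fun i => var μ (gmask i)) :=
    (Matrix.ext hS).trans <| covMatrix_eq_diagonal hgmask_meas fun i j hij => by
      simpa only [hgmask_eq] using hind.indepFun_masked hgm hmm p hij
  refine ⟨hdiag, hdiag ▸ frobeniusNorm_diagonal_le fun i => ?_⟩
  have hD : σ ^ 2 / (phat * B) + (1 - phat) / phat * μv i ^ 2
      = (σ ^ 2 / B + μv i ^ 2) / phat - μv i ^ 2 := by
    field_simp
    ring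
  rw [hvar, hD]
  exact abs_div_sub_le_abs_div_sub (by positivity) (le_add_of_nonneg_left (by positivity))
    hphat_pos (hphat_le i) (hp1 i)

/-- Covariance bound of the paper's Corollary: with gradient coordinates `gᵢ` of mean
`μᵢ` and variance `σ²/B`, Bernoulli masks `mᵢ` of parameters `pᵢ > 0`, the whole family
mutually independent, and `g̃ᵢ = (mᵢ/pᵢ) gᵢ`, the covariance matrix `Σ` of `g̃` is the
diagonal matrix of the variances `Var[g̃ᵢ]`, and `‖Σ‖_F ≤ ‖D‖_F` where `D` is the
diagonal matrix with entries `σ²/(p̂ B) + ((1-p̂)/p̂) μᵢ²` and `p̂ = minᵢ pᵢ`. -/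
theorem masked_gradient_covariance_bound {Ω : Type*} [MeasurableSpace Ω]
    (μ : Measure Ω) [IsProbabilityMeasure μ]
    (k : ℕ) (hk : 0 < k) (g m : Fin k → Ω → ℝ)
    (μv : Fin k → ℝ) (σ : ℝ) (hσ : 0 ≤ σ) (B : ℕ) (hB : 0 < B)
    (p : Fin k → ℝ) (hp0 : ∀ i, 0 < p i) (hp1 : ∀ i, p i ≤ 1)
    (hgm : ∀ i, Measurable (g i)) (hg : ∀ i, MemLp (g i) 2 μ)
    (hgmean : ∀ i, ∫ ω, g i ω ∂μ = μv i)
    (hgvar : ∀ i, var μ (g i) = σ ^ 2 / (B : ℝ))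
    (hmm : ∀ i, Measurable (m i))
    (hm01 : ∀ i ω, m i ω = 0 ∨ m i ω = 1)
    (hmp : ∀ i, μ {ω | m i ω = 1} = ENNReal.ofReal (p i))
    (hind : iIndepFun (m := fun _ : Fin k ⊕ Fin k => Real.measurableSpace)
      (Sum.elim g m) μ)
    (gmask : Fin k → Ω → ℝ)
    (hgmask : ∀ i ω, gmask i ω = (m i ω / p i) * g i ω)
    (phat : ℝ)
    (hphat : phat = Finset.univ.inf' (Finset.univ_nonempty_iff.mpr ⟨⟨0, hk⟩⟩) p)
    (Smat : Matrix (Fin k) (Fin k) ℝ)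
    (hS : ∀ i j, Smat i j = cov μ (gmask i) (gmask j)) :
    Smat = Matrix.diagonal (fun i => var μ (gmask i))
      ∧ frobeniusNorm Smat
        ≤ frobeniusNorm (Matrix.diagonal
            (fun i => σ ^ 2 / (phat * (B : ℝ)) + ((1 - phat) / phat) * (μv i) ^ 2)) :=
  masked_gradient_covariance_bound_general μ k hk g m μv σ B p hp0 hp1 hgm hgmean hgvar hmm hm01 hmp
    hind gmask hgmask phat hphat Smat hS
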